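/- arXiv:2206.07892 — 4 statements merged into one kernel-verified Lean document; each statement's English description precedes it below -/
import Mathlib

section
/- Fix a unit vector μ ∈ ℝ^d and σ > 0, and let (x,y) ∼ D_{μ,σ,d}. Let w ∈ ℝ^d, and write w = u + v where u = (μᵀw)μ and v = w − u. Assume μᵀw ≥ 0 and v ≠ 0, and let q := (uᵀμ)/‖v‖₂ = μᵀw/‖v‖₂. Then Pr_{(x,y)∼D_{μ,σ,d}}[ |vᵀx| ≥ y·(uᵀx) ] ≤ 2e^{−q²/(8σ²)} + e^{−d/8}. -/
open MeasureTheory Real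
open scoped RealInnerProductSpace ENNReal NNReal

noncomputable section

/-- Euclidean space ℝ^d. -/
abbrev Euc (d : ℕ) : Type := EuclideanSpace ℝ (Fin d)

/-- The uniform probability measure on the unit sphere of `ℝ^k`, viewed as a
measure on `ℝ^k`. -/
noncomputable def unitSphereUniform (k : ℕ) : Measure (Euc k) :=
  ((volume : Measure (Euc k)).toSphere Set.univ)⁻¹ •
    Measure.map Subtype.val ((volume : Measure (Euc k)).toSphere)

/-- The uniform probability measure on the sphere of radius `r` inside the
subspace `K` of `ℝ^d`, viewed as a measure on `ℝ^d`. -/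
noncomputable def subSphereUniform {d : ℕ} (K : Submodule ℝ (Euc d)) (r : ℝ) :
    Measure (Euc d) :=
  Measure.map (fun z => r • (((stdOrthonormalBasis ℝ K).repr.symm z : K) : Euc d))
    (unitSphereUniform (Module.finrank ℝ K))

/-- The uniform distribution on `{1, -1} ⊆ ℝ`. -/
noncomputable def signUniform : Measure ℝ :=
  ((2 : ℝ≥0)⁻¹ : ℝ≥0) • (Measure.dirac (1 : ℝ) + Measure.dirac (-1 : ℝ))

/-- The linear data distribution `D_{μ,σ,d}` on `ℝ^d × ℝ`:  `y` uniform on `{±1}`,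
`ξ` uniform on the sphere of radius `√(d-1)·σ` in the hyperplane orthogonal to `μ`,
and `x = y•μ + ξ`. -/
noncomputable def linearDist (d : ℕ) (μ : Euc d) (σ : ℝ) : Measure (Euc d × ℝ) :=
  Measure.map (fun p : ℝ × Euc d => (p.1 • μ + p.2, p.1))
    (signUniform.prod
      (subSphereUniform (Submodule.span ℝ {μ})ᗮ (Real.sqrt ((d : ℝ) - 1) * σ)))

/-- The uniform distribution on `{μ₁, -μ₁, μ₂, -μ₂}`. -/
noncomputable def fourUniform {d : ℕ} (μ₁ μ₂ : Euc d) : Measure (Euc d) :=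
  ((4 : ℝ≥0)⁻¹ : ℝ≥0) •
    (Measure.dirac μ₁ + Measure.dirac (-μ₁) + Measure.dirac μ₂ + Measure.dirac (-μ₂))

/-- The XOR data distribution `D_{μ₁,μ₂,σ,d}` on `ℝ^d × ℝ`: `z` uniform on
`{±μ₁, ±μ₂}`, `ξ` uniform on the sphere of radius `√(d-2)·σ` in the subspace
orthogonal to `μ₁, μ₂`, `x = z + ξ`, and `y = ⟪μ₁,x⟫² - ⟪μ₂,x⟫²`. -/
noncomputable def xorDist (d : ℕ) (μ₁ μ₂ : Euc d) (σ : ℝ) : Measure (Euc d × ℝ) :=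
  Measure.map (fun p : Euc d × Euc d =>
      (p.1 + p.2, ⟪μ₁, p.1 + p.2⟫ ^ 2 - ⟪μ₂, p.1 + p.2⟫ ^ 2))
    ((fourUniform μ₁ μ₂).prod
      (subSphereUniform (Submodule.span ℝ {μ₁, μ₂})ᗮ (Real.sqrt ((d : ℝ) - 2) * σ)))

/-- The distribution of an i.i.d. sample of size `n` from `D`. -/
noncomputable def iid {α : Type*} [MeasurableSpace α] (n : ℕ) (D : Measure α) :
    Measure (Fin n → α) :=
  Measure.pi fun _ => D

/-- "With probability at least `p` over `s ∼ μ`, `Φ s` holds". -/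
def withProb {α : Type*} [MeasurableSpace α] (μ : Measure α) (p : ℝ) (Φ : α → Prop) : Prop :=
  ∃ E : Set α, MeasurableSet E ∧ ENNReal.ofReal p ≤ μ E ∧ ∀ s ∈ E, Φ s

/-- 0/1 test loss of a classifier `g` under distribution `D`. -/
noncomputable def testLoss {d : ℕ} (D : Measure (Euc d × ℝ)) (g : Euc d → ℝ) : ℝ :=
  (D {p | p.2 * g p.1 ≤ 0}).toReal

/-- Empirical 0/1 loss on a sample `S`. -/
noncomputable def empLoss {d : ℕ} (n : ℕ) (S : Fin n → Euc d × ℝ) (g : Euc d → ℝ) : ℝ :=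
  ((Finset.univ.filter fun j => (S j).2 * g ((S j).1) ≤ 0).card : ℝ) / n

/-- Margin of classifier `g` on the sample `S`: `min_j y_j g(x_j)`. -/
noncomputable def margin {d : ℕ} (n : ℕ) (g : Euc d → ℝ) (S : Fin n → Euc d × ℝ) : ℝ :=
  ⨅ j : Fin n, (S j).2 * g ((S j).1)

/-- Max margin over unit-norm linear classifiers. -/
noncomputable def linMaxMargin {d : ℕ} (n : ℕ) (S : Fin n → Euc d × ℝ) : ℝ :=
  ⨆ w : {w : Euc d // ‖w‖ ≤ 1}, margin n (fun x => ⟪(w : Euc d), x⟫) S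

/-- The activation `φ(z) = max(0,z)^h`. -/
noncomputable def phi (h z : ℝ) : ℝ := max 0 z ^ h

/-- Two-layer network `f_W(x) = (1/m) ∑ i, a i * φ(⟪w_i, x⟫)`. -/
noncomputable def netFun {d : ℕ} (h : ℝ) (m : ℕ) (a : Fin m → ℝ) (W : Fin m → Euc d)
    (x : Euc d) : ℝ :=
  (∑ i, a i * phi h ⟪W i, x⟫) / m

/-- Norm of a weight matrix: `√((1/m) ∑ i ‖w_i‖²)`. -/
noncomputable def wnorm {d : ℕ} (m : ℕ) (W : Fin m → Euc d) : ℝ :=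
  Real.sqrt ((∑ i, ‖W i‖ ^ 2) / m)

/-- Max margin over weight matrices of norm at most 1. -/
noncomputable def xorMaxMargin {d : ℕ} (h : ℝ) (m n : ℕ) (a : Fin m → ℝ)
    (S : Fin n → Euc d × ℝ) : ℝ :=
  ⨆ W : {W : Fin m → Euc d // wnorm m W ≤ 1},
    margin n (netFun h m a (W : Fin m → Euc d)) S

/-- `κ` is the threshold `κ_gen^{XOR,h}`: the positive solution of
`2^{1/h}·√(2/κ) = √(κ/(4+κ)) + √(16/(κ(4+κ)))`. -/
def IsKappaGen (h κ : ℝ) : Prop :=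
  0 < κ ∧ (2 : ℝ) ^ (1 / h) * Real.sqrt (2 / κ) =
    Real.sqrt (κ / (4 + κ)) + Real.sqrt (16 / (κ * (4 + κ)))

/-- ℓ₂ operator norm of a square matrix. -/
noncomputable def matOpNorm {n : ℕ} (M : Matrix (Fin n) (Fin n) ℝ) : ℝ :=
  ‖(Matrix.toEuclideanCLM (𝕜 := ℝ) M : EuclideanSpace ℝ (Fin n) →L[ℝ] EuclideanSpace ℝ (Fin n))‖

/-- Gram matrix of a family of vectors. -/
noncomputable def gram {d n : ℕ} (Ξ : Fin n → Euc d) : Matrix (Fin n) (Fin n) ℝ :=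
  Matrix.of fun i j => ⟪Ξ i, Ξ j⟫

end

/-!
On the support of `D_{μ,σ,d}` we have `y² = 1`, `ξ ⊥ μ` and `v ⊥ μ`, so `y⟪u, x⟫ = ⟪μ, w⟫` and
`⟪v, x⟫ = ⟪v, ξ⟫`: the event says that the noise `ξ`, uniform on the sphere of radius
`r = √(d-1)σ` in `μᗮ ≅ ℝᵏ` (`k = d - 1`), lies in the cap `{t ≤ |⟪e, z⟫|}` of the unit sphere, where
`e = v/‖v‖` and `t = q/r`. The normalized surface measure of a cap is the volume fraction of the
cone `(0,1)·cap` in the unit ball, and that cone lies in the two balls of radius `√(1 - 3t²/4)`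
centred at `±(t/2)e`. Hence the probability is at most `2(1 - 3t²/4)^{k/2} ≤ 2e^{-kt²/8}`, and
`kt² = q²/σ²`.
-/

open Set Metric
open scoped Pointwise

section Cap

variable {E : Type*} [NormedAddCommGroup E] [InnerProductSpace ℝ E]

theorem sqrt_one_sub_le_exp_neg_sq (t : ℝ) :
    √(1 - 3 * t ^ 2 / 4) ≤ exp (-t ^ 2 / 8) := by
  have hsq : exp (-t ^ 2 / 8) ^ 2 = exp (-t ^ 2 / 4) := by rw [← exp_nat_mul]; ring_nf
  have h : 1 - 3 * t ^ 2 / 4 ≤ exp (-t ^ 2 / 8) ^ 2 := by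
    nlinarith [add_one_le_exp (-t ^ 2 / 4), sq_nonneg t]
  calc √(1 - 3 * t ^ 2 / 4) ≤ √(exp (-t ^ 2 / 8) ^ 2) := sqrt_le_sqrt h
    _ = exp (-t ^ 2 / 8) := sqrt_sq (exp_nonneg _)

theorem norm_sub_half_smul_sq_le {e x : E} {t : ℝ} (he : ‖e‖ = 1) (ht : 0 ≤ t) (ht₁ : t ≤ 1)
    (hx : ‖x‖ ≤ 1) (hex : t * ‖x‖ ≤ ⟪e, x⟫) :
    ‖x - (t / 2) • e‖ ^ 2 ≤ 1 - 3 * t ^ 2 / 4 := by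
  rw [norm_sub_sq_real, norm_smul, he, real_inner_smul_right, real_inner_comm,
    Real.norm_of_nonneg (by linarith)]
  -- with `a = ‖x‖` this is `(a - 1) (a + 1 - t²) ≤ 0`
  nlinarith [mul_nonneg (sub_nonneg.2 hx) (by nlinarith [norm_nonneg x] : 0 ≤ ‖x‖ + 1 - t ^ 2),
    mul_le_mul_of_nonneg_left hex ht]

theorem Ioo_smul_cap_subset {e : E} {t : ℝ} (he : ‖e‖ = 1) (ht : 0 ≤ t) :
    Ioo (0 : ℝ) 1 • ({z | t ≤ |⟪e, z⟫|} ∩ sphere (0 : E) 1) ⊆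
      closedBall ((t / 2) • e) √(1 - 3 * t ^ 2 / 4) ∪
        closedBall ((t / 2) • -e) √(1 - 3 * t ^ 2 / 4) := by
  rintro _ ⟨s, ⟨hs₀, hs₁⟩, z, ⟨hzt, hz⟩, rfl⟩
  change t ≤ |⟪e, z⟫| at hzt
  change s • z ∈ _
  rw [mem_sphere_zero_iff_norm] at hz
  have ht₁ : t ≤ 1 := hzt.trans ((abs_real_inner_le_norm e z).trans (by rw [he, hz, one_mul]))
  have hsz : ‖s • z‖ = s := by rw [norm_smul, hz, mul_one, Real.norm_of_nonneg hs₀.le]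
  have key : ∀ e' : E, ‖e'‖ = 1 → t ≤ ⟪e', z⟫ →
      s • z ∈ closedBall ((t / 2) • e') √(1 - 3 * t ^ 2 / 4) := by
    intro e' he' hte'
    rw [mem_closedBall, dist_eq_norm, ← sqrt_sq (norm_nonneg _)]
    refine sqrt_le_sqrt (norm_sub_half_smul_sq_le he' ht ht₁ (by linarith) ?_)
    rw [hsz, real_inner_smul_right, mul_comm]
    exact mul_le_mul_of_nonneg_left hte' hs₀.le
  rcases le_abs'.1 hzt with h | h
  · exact Or.inr (key (-e) (by rw [norm_neg, he]) (by rw [inner_neg_left]; linarith))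
  · exact Or.inl (key e he h)

end Cap

theorem unitSphereUniform_apply {k : ℕ} (hk : k ≠ 0) {A : Set (Euc k)} (hA : MeasurableSet A) :
    unitSphereUniform k A =
      volume (Ioo (0 : ℝ) 1 • (A ∩ sphere (0 : Euc k) 1)) / volume (ball (0 : Euc k) 1) := by
  rw [unitSphereUniform, Measure.smul_apply, Measure.map_apply measurable_subtype_coe hA,
    Measure.toSphere_apply' _ (measurable_subtype_coe hA), Measure.toSphere_apply_univ,
    Subtype.image_preimage_coe, inter_comm, smul_eq_mul, finrank_euclideanSpace_fin,
    ← ENNReal.div_eq_inv_mul, ENNReal.mul_div_mul_left _ _ (by simpa) (by simp)]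

theorem unitSphereUniform_cap_le {k : ℕ} {e : Euc k} (he : ‖e‖ = 1) {t : ℝ} (ht : 0 ≤ t) :
    unitSphereUniform k {z | t ≤ |⟪e, z⟫|} ≤ ENNReal.ofReal (2 * exp (-k * t ^ 2 / 8)) := by
  have hk : k ≠ 0 := by
    rintro rfl
    simp [Subsingleton.elim e 0] at he
  set R := √(1 - 3 * t ^ 2 / 4)
  have hR : R ^ k ≤ exp (-k * t ^ 2 / 8) :=
    calc R ^ k ≤ exp (-t ^ 2 / 8) ^ k :=
          pow_le_pow_left₀ (sqrt_nonneg _) (sqrt_one_sub_le_exp_neg_sq t) k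
      _ = exp (-k * t ^ 2 / 8) := by rw [← exp_nat_mul]; ring_nf
  have hA : MeasurableSet {z : Euc k | t ≤ |⟪e, z⟫|} := measurableSet_le (by fun_prop) (by fun_prop)
  have hB₀ : volume (ball (0 : Euc k) 1) ≠ 0 := (measure_ball_pos _ _ one_pos).ne'
  have hBtop : volume (ball (0 : Euc k) 1) ≠ ⊤ := measure_ball_lt_top.ne
  rw [unitSphereUniform_apply hk hA, ENNReal.div_le_iff hB₀ hBtop]
  calc volume (Ioo (0 : ℝ) 1 • ({z : Euc k | t ≤ |⟪e, z⟫|} ∩ sphere 0 1))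
      ≤ volume (closedBall ((t / 2) • e) R ∪ closedBall ((t / 2) • -e) R) :=
        measure_mono (Ioo_smul_cap_subset he ht)
    _ ≤ volume (closedBall ((t / 2) • e) R) + volume (closedBall ((t / 2) • -e) R) :=
        measure_union_le _ _
    _ = ENNReal.ofReal (2 * R ^ k) * volume (ball (0 : Euc k) 1) := by
        rw [Measure.addHaar_closedBall _ _ (sqrt_nonneg _),
          Measure.addHaar_closedBall _ _ (sqrt_nonneg _), finrank_euclideanSpace_fin,
          ENNReal.ofReal_mul zero_le_two, ENNReal.ofReal_ofNat]
        ring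
    _ ≤ ENNReal.ofReal (2 * exp (-k * t ^ 2 / 8)) * volume (ball (0 : Euc k) 1) := by
        gcongr

section SubspaceSphere

variable {d : ℕ}

instance (K : Submodule ℝ (Euc d)) (r : ℝ) : SFinite (subSphereUniform K r) := by
  unfold subSphereUniform unitSphereUniform
  infer_instance

theorem ae_mem_subSphereUniform (K : Submodule ℝ (Euc d)) (r : ℝ) :
    ∀ᵐ ξ ∂subSphereUniform K r, ξ ∈ K := by
  rw [subSphereUniform, ae_map_iff (p := (· ∈ K)) (by fun_prop)
    K.closed_of_finiteDimensional.measurableSet]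
  exact Filter.Eventually.of_forall fun z => K.smul_mem r (Submodule.coe_mem _)

theorem subSphereUniform_cap_le {K : Submodule ℝ (Euc d)} {v : Euc d} (hvK : v ∈ K) (hv : v ≠ 0)
    {r : ℝ} (hr : 0 < r) {a : ℝ} (ha : 0 ≤ a) :
    subSphereUniform K r {ξ | a ≤ |⟪v, ξ⟫|} ≤
      ENNReal.ofReal (2 * exp (-Module.finrank ℝ K * (a / (r * ‖v‖)) ^ 2 / 8)) := by
  set b := stdOrthonormalBasis ℝ K
  have hv₀ : 0 < ‖v‖ := norm_pos_iff.2 hv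
  set e := ‖v‖⁻¹ • b.repr ⟨v, hvK⟩
  have he : ‖e‖ = 1 := by
    rw [norm_smul, LinearIsometryEquiv.norm_map, norm_inv, norm_norm, Submodule.coe_norm,
      inv_mul_cancel₀ hv₀.ne']
  have hinner : ∀ z, ⟪v, (b.repr.symm z : Euc d)⟫ = ‖v‖ * ⟪e, z⟫ := by
    intro z
    rw [real_inner_smul_left, mul_inv_cancel_left₀ hv₀.ne', ← b.repr.apply_symm_apply z,
      b.repr.inner_map_map, b.repr.apply_symm_apply]
    rfl
  have hpre : (fun z => r • ((b.repr.symm z : K) : Euc d)) ⁻¹' {ξ | a ≤ |⟪v, ξ⟫|} =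
      {z | a / (r * ‖v‖) ≤ |⟪e, z⟫|} := by
    ext z
    rw [mem_preimage, mem_ofPred_eq, mem_ofPred_eq, real_inner_smul_right, hinner,
      div_le_iff₀ (by positivity), ← mul_assoc, abs_mul, abs_of_pos (by positivity), mul_comm]
  have hA : MeasurableSet {ξ : Euc d | a ≤ |⟪v, ξ⟫|} := measurableSet_le (by fun_prop) (by fun_prop)
  rw [subSphereUniform, Measure.map_apply (by fun_prop) hA, hpre]
  exact unitSphereUniform_cap_le he (by positivity)

end SubspaceSphere

theorem linearDist_apply_of_forall_sign {d : ℕ} {μ : Euc d} {σ : ℝ} {S : Set (Euc d × ℝ)}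
    (hS : MeasurableSet S) {m : ℝ≥0∞}
    (h : ∀ y : ℝ, y = 1 ∨ y = -1 →
      subSphereUniform (Submodule.span ℝ {μ})ᗮ (√((d : ℝ) - 1) * σ) {ξ | (y • μ + ξ, y) ∈ S} = m) :
    linearDist d μ σ S = m := by
  have hF : Measurable fun p : ℝ × Euc d => (p.1 • μ + p.2, p.1) := by fun_prop
  have half : (((2 : ℝ≥0)⁻¹ : ℝ≥0) : ℝ≥0∞) * 2 = 1 := by
    rw [ENNReal.coe_inv two_ne_zero, ENNReal.coe_two, ENNReal.inv_mul_cancel two_ne_zero (by simp)]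
  rw [linearDist, Measure.map_apply hF hS, Measure.prod_apply (hF hS), signUniform,
    lintegral_smul_measure, lintegral_add_measure, lintegral_dirac, lintegral_dirac]
  have hsec : ∀ y : ℝ, y = 1 ∨ y = -1 →
      subSphereUniform (Submodule.span ℝ {μ})ᗮ (√((d : ℝ) - 1) * σ)
        (Prod.mk y ⁻¹' ((fun p : ℝ × Euc d => (p.1 • μ + p.2, p.1)) ⁻¹' S)) = m := h
  rw [hsec 1 (.inl rfl), hsec (-1) (.inr rfl), ← two_mul, ENNReal.smul_def, smul_eq_mul, ← mul_assoc,
    half, one_mul]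

theorem abs_inner_ge_sign_mul_inner_iff {E : Type*} [NormedAddCommGroup E] [InnerProductSpace ℝ E]
    {μ w u v ξ : E} {y : ℝ} (hμ : ‖μ‖ = 1) (hu : u = ⟪μ, w⟫ • μ) (hvμ : ⟪v, μ⟫ = 0)
    (hξ : ⟪μ, ξ⟫ = 0) (hy : y = 1 ∨ y = -1) :
    |⟪v, y • μ + ξ⟫| ≥ y * ⟪u, y • μ + ξ⟫ ↔ ⟪μ, w⟫ ≤ |⟪v, ξ⟫| := by
  have hμμ : ⟪μ, μ⟫ = 1 := by rw [real_inner_self_eq_norm_sq, hμ, one_pow]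
  have hyy : y * y = 1 := by rcases hy with rfl | rfl <;> norm_num
  rw [inner_add_right, real_inner_smul_right, hvμ, hu, real_inner_smul_left, inner_add_right,
    real_inner_smul_right, hμμ, hξ, mul_zero, zero_add, add_zero, mul_one, ← mul_assoc,
    mul_right_comm, hyy, one_mul, ge_iff_le]

theorem stmt8_general (d : ℕ) (μ : Euc d) (σ : ℝ) (hμ : ‖μ‖ = 1) (hσ : 0 < σ)
    (w u v : Euc d) (hu : u = ⟪μ, w⟫ • μ) (hv : v = w - u)
    (hpos : 0 ≤ ⟪μ, w⟫) (hvne : v ≠ 0) (q : ℝ) (hq : q = ⟪μ, w⟫ / ‖v‖) :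
    linearDist d μ σ {p | |⟪v, p.1⟫| ≥ p.2 * ⟪u, p.1⟫} ≤
      ENNReal.ofReal (2 * Real.exp (-q ^ 2 / (8 * σ ^ 2)) + Real.exp (-(d : ℝ) / 8)) := by
  set K := (Submodule.span ℝ {μ})ᗮ
  have hμv : ⟪μ, v⟫ = 0 := by
    rw [hv, hu, inner_sub_right, real_inner_smul_right, real_inner_self_eq_norm_sq, hμ]; ring
  have hvK : v ∈ K := Submodule.mem_orthogonal_singleton_iff_inner_right.2 hμv
  have hdim : (Module.finrank ℝ K : ℝ) = d - 1 := by
    have h := (Submodule.span ℝ {μ}).finrank_add_finrank_orthogonal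
    rw [finrank_span_singleton (norm_ne_zero_iff.1 (by rw [hμ]; exact one_ne_zero)),
      finrank_euclideanSpace_fin] at h
    have h' := congrArg (Nat.cast : ℕ → ℝ) h
    push_cast at h'
    linarith
  have hK : (0 : ℝ) < Module.finrank ℝ K :=
    Nat.cast_pos.2 (Module.finrank_pos_iff_exists_ne_zero.2 ⟨⟨v, hvK⟩, by simpa using hvne⟩)
  have hr : 0 < √((d : ℝ) - 1) * σ := mul_pos (sqrt_pos.2 (hdim ▸ hK)) hσ
  have hevent : linearDist d μ σ {p | |⟪v, p.1⟫| ≥ p.2 * ⟪u, p.1⟫} =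
      subSphereUniform K (√((d : ℝ) - 1) * σ) {ξ | ⟪μ, w⟫ ≤ |⟪v, ξ⟫|} := by
    refine linearDist_apply_of_forall_sign (measurableSet_le (by fun_prop) (by fun_prop))
      fun y hy => measure_congr ?_
    filter_upwards [ae_mem_subSphereUniform K _] with ξ hξ
    exact propext (abs_inner_ge_sign_mul_inner_iff hμ hu (real_inner_comm μ v ▸ hμv)
      (Submodule.mem_orthogonal_singleton_iff_inner_right.1 hξ) hy)
  have hexp : -Module.finrank ℝ K * (⟪μ, w⟫ / (√((d : ℝ) - 1) * σ * ‖v‖)) ^ 2 / 8 =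
      -q ^ 2 / (8 * σ ^ 2) := by
    rw [hq, div_pow, div_pow, mul_pow, mul_pow, sq_sqrt (hdim ▸ hK.le), ← hdim]
    field_simp
  rw [hevent]
  refine (subSphereUniform_cap_le hvK hvne hr hpos).trans (ENNReal.ofReal_le_ofReal ?_)
  rw [hexp]
  linarith [exp_nonneg (-(d : ℝ) / 8)]

/-- **The overfitting component only slightly affects a test point (linear).**
For `w = u + v` with `u = (μᵀw)μ` the signal component and `v ⊥ μ` the
orthogonal component, `μᵀw ≥ 0`, `v ≠ 0`, and `q = μᵀw/‖v‖`, a fresh sample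
`(x,y) ∼ D_{μ,σ,d}` satisfies `|vᵀx| ≥ y·(uᵀx)` with probability at most
`2e^{-q²/(8σ²)} + e^{-d/8}`. -/
theorem stmt8 (d : ℕ) (hd : 0 < d) (μ : Euc d) (σ : ℝ) (hμ : ‖μ‖ = 1) (hσ : 0 < σ)
    (w u v : Euc d) (hu : u = ⟪μ, w⟫ • μ) (hv : v = w - u)
    (hpos : 0 ≤ ⟪μ, w⟫) (hvne : v ≠ 0) (q : ℝ) (hq : q = ⟪μ, w⟫ / ‖v‖) :
    linearDist d μ σ {p | |⟪v, p.1⟫| ≥ p.2 * ⟪u, p.1⟫} ≤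
      ENNReal.ofReal (2 * Real.exp (-q ^ 2 / (8 * σ ^ 2)) + Real.exp (-(d : ℝ) / 8)) :=
  stmt8_general d μ σ hμ hσ w u v hu hv hpos hvne q hq
end

section
/- Let n, d be positive integers, σ > 0, δ ≥ 0, and let Ξ ∈ ℝ^{d×n} have columns ξ_1,…,ξ_n. Suppose ‖(1/(σ²d))·ΞᵀΞ − I_n‖₂ ≤ δ, where ‖·‖₂ is the spectral norm. Then for every v ∈ ℝ^d and every y ∈ {−1,1}ⁿ, min_{1 ≤ j ≤ n} y_j·vᵀξ_j ≤ ‖v‖₂·√(1+δ)/√κ, where κ := n/(dσ²). -/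
open MeasureTheory Real
open scoped RealInnerProductSpace ENNReal NNReal

/-! Put `u = ∑ j, y j • Ξ j`. The quadratic form of the Gram matrix at `y` is `‖u‖²` and
`‖y‖² = n`, so the spectral bound gives `‖u‖² ≤ (1 + δ) n σ² d`. The minimum of the numbers
`y j ⟪v, Ξ j⟫` is at most their average `⟪v, u⟫ / n ≤ ‖v‖ ‖u‖ / n`. -/
open scoped Matrix

theorem dotProduct_gram_mulVec {n d : ℕ} (Ξ : Fin n → Euc d) (y : Fin n → ℝ) :
    y ⬝ᵥ gram Ξ *ᵥ y = ‖∑ j, y j • Ξ j‖ ^ 2 := by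
  simp only [← real_inner_self_eq_norm_sq, sum_inner, inner_sum, real_inner_smul_left,
    real_inner_smul_right, dotProduct, Matrix.mulVec, gram, Matrix.of_apply, Finset.mul_sum]
  refine Finset.sum_congr rfl fun i _ => Finset.sum_congr rfl fun j _ => ?_
  rw [real_inner_comm]; ring

theorem dotProduct_mulVec_le_matOpNorm {n : ℕ} (M : Matrix (Fin n) (Fin n) ℝ)
    (y : EuclideanSpace ℝ (Fin n)) : y.ofLp ⬝ᵥ M *ᵥ y.ofLp ≤ matOpNorm M * ‖y‖ ^ 2 := by
  rw [← Matrix.inner_toEuclideanCLM]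
  set T := Matrix.toEuclideanCLM (𝕜 := ℝ) M
  calc ⟪y, T y⟫ ≤ ‖y‖ * ‖T y‖ := real_inner_le_norm _ _
    _ ≤ ‖y‖ * (matOpNorm M * ‖y‖) := by gcongr; exact T.le_opNorm y
    _ = matOpNorm M * ‖y‖ ^ 2 := by ring

theorem smul_norm_sum_smul_sq_le {n d : ℕ} {c δ : ℝ} {Ξ : Fin n → Euc d}
    (hΞ : matOpNorm (c • gram Ξ - 1) ≤ δ) (y : EuclideanSpace ℝ (Fin n)) :
    c * ‖∑ j, y j • Ξ j‖ ^ 2 ≤ (1 + δ) * ‖y‖ ^ 2 := by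
  have hquad : y.ofLp ⬝ᵥ (c • gram Ξ - 1) *ᵥ y.ofLp = c * ‖∑ j, y j • Ξ j‖ ^ 2 - ‖y‖ ^ 2 := by
    rw [Matrix.sub_mulVec, Matrix.smul_mulVec, Matrix.one_mulVec, dotProduct_sub,
      dotProduct_smul, dotProduct_gram_mulVec, smul_eq_mul, ← real_inner_self_eq_norm_sq y]
    rfl
  have hop := mul_le_mul_of_nonneg_right hΞ (sq_nonneg ‖y‖)
  linarith [dotProduct_mulVec_le_matOpNorm (c • gram Ξ - 1) y]

theorem norm_sq_toLp_of_forall_eq_one_or_eq_neg_one {n : ℕ} {y : Fin n → ℝ}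
    (hy : ∀ j, y j = 1 ∨ y j = -1) : ‖WithLp.toLp 2 y‖ ^ 2 = n := by
  have hsq : ∀ j, y j ^ 2 = 1 := fun j => by rcases hy j with h | h <;> simp [h]
  simp [EuclideanSpace.norm_sq_eq, hsq]

theorem ciInf_le_sum_div_card {ι : Type*} [Fintype ι] [Nonempty ι] (f : ι → ℝ) :
    ⨅ i, f i ≤ (∑ i, f i) / Fintype.card ι := by
  rw [le_div_iff₀ (by exact_mod_cast Fintype.card_pos), mul_comm, ← nsmul_eq_mul]
  exact Finset.card_nsmul_le_sum _ _ _ fun i _ => ciInf_le (Finite.bddBelow_range f) i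

theorem stmt11_general (n d : ℕ) (hn : 0 < n) (hd : 0 < d) (σ δ : ℝ) (hσ : 0 < σ)
    (Ξ : Fin n → Euc d)
    (hΞ : matOpNorm ((σ ^ 2 * d)⁻¹ • gram Ξ - 1) ≤ δ)
    (v : Euc d) (y : Fin n → ℝ) (hy : ∀ j, y j = 1 ∨ y j = -1) :
    (⨅ j : Fin n, y j * ⟪v, Ξ j⟫) ≤
      ‖v‖ * Real.sqrt (1 + δ) / Real.sqrt ((n : ℝ) / (d * σ ^ 2)) := by
  set u := ∑ j, y j • Ξ j
  have hn' : (0 : ℝ) < n := Nat.cast_pos.mpr hn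
  have hscale : (0 : ℝ) < σ ^ 2 * d := by positivity
  have hnorm_u : ‖u‖ ^ 2 ≤ (1 + δ) * n * (σ ^ 2 * d) := by
    have := smul_norm_sum_smul_sq_le hΞ (WithLp.toLp 2 y)
    rw [norm_sq_toLp_of_forall_eq_one_or_eq_neg_one hy, inv_mul_le_iff₀ hscale] at this
    linarith
  have hmin : ⨅ j, y j * ⟪v, Ξ j⟫ ≤ ⟪v, u⟫ / n := by
    have : Nonempty (Fin n) := ⟨⟨0, hn⟩⟩
    simpa [u, inner_sum, real_inner_smul_right] using
      ciInf_le_sum_div_card fun j => y j * ⟪v, Ξ j⟫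
  have hnorm_u_div : ‖u‖ / n ≤ √(1 + δ) / √(n / (d * σ ^ 2)) := by
    rw [← Real.sqrt_div' _ (by positivity), ← Real.sqrt_sq (by positivity : 0 ≤ ‖u‖ / n)]
    refine Real.sqrt_le_sqrt ?_
    rw [div_div_eq_mul_div, div_pow, div_le_div_iff₀ (by positivity) hn']
    nlinarith [mul_le_mul_of_nonneg_right hnorm_u hn'.le]
  calc ⨅ j, y j * ⟪v, Ξ j⟫ ≤ ⟪v, u⟫ / n := hmin
    _ ≤ ‖v‖ * ‖u‖ / n := by gcongr; exact real_inner_le_norm v u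
    _ ≤ ‖v‖ * √(1 + δ) / √(n / (d * σ ^ 2)) := by
      rw [mul_div_assoc, mul_div_assoc]; gcongr

/-- **Margin upper bound from Gram-matrix concentration.**
If `‖(1/(σ²d))ΞᵀΞ - I‖₂ ≤ δ`, then for every `v` and every sign vector `y`,
`min_j y_j vᵀξ_j ≤ ‖v‖·√(1+δ)/√κ` where `κ = n/(dσ²)`. -/
theorem stmt11 (n d : ℕ) (hn : 0 < n) (hd : 0 < d) (σ δ : ℝ) (hσ : 0 < σ)
    (hδ : 0 ≤ δ) (Ξ : Fin n → Euc d)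
    (hΞ : matOpNorm ((σ ^ 2 * d)⁻¹ • gram Ξ - 1) ≤ δ)
    (v : Euc d) (y : Fin n → ℝ) (hy : ∀ j, y j = 1 ∨ y j = -1) :
    (⨅ j : Fin n, y j * ⟪v, Ξ j⟫) ≤
      ‖v‖ * Real.sqrt (1 + δ) / Real.sqrt ((n : ℝ) / (d * σ ^ 2)) :=
  stmt11_general n d hn hd σ δ hσ Ξ hΞ v y hy
end

section
/- Let h ∈ (1,2) and φ(z) := max(0,z)^h. Let (Ω, 𝔽, ℙ) be a probability space and let a, b : Ω → ℝ be square-integrable random variables. Then: (1) |E[φ(a+b) − φ(a)]| ≤ sqrt(E[4a² + 2])·sqrt(E[b²]) + h·(E[b²])^{h/2}; and (2) |E[φ(a+b) − φ(a)]| ≤ 2·E[1 + φ(a)]·sqrt(E[b²]) + h·(E[b²])^{h/2}. -/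
open MeasureTheory Real
open scoped RealInnerProductSpace ENNReal NNReal

/-!
Pointwise, with `t = max 0 x`, the mean value inequality for the convex function `s ↦ s ^ h`
together with the subadditivity of `s ↦ s ^ (h - 1)` (as `h - 1 ≤ 1`) gives
`|φ(x + y) - φ(x)| ≤ φ'(x) |y| + h |y| ^ h` with `φ' = phiDeriv`. Taking expectations, the
first term is bounded by Cauchy–Schwarz and the second by Lyapunov's inequality
`E|b| ^ h ≤ (E b²) ^ (h / 2)`; finally `φ'(a)²` is dominated both by `4 a² + 2` (weighted
AM–GM) and by `4 (1 + φ(a))`.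
-/

noncomputable def phiDeriv (h x : ℝ) : ℝ := h * max 0 x ^ (h - 1)

section Pointwise

variable {h : ℝ}

lemma rpow_sub_rpow_le_mul_rpow_sub_one_mul (hh : 1 ≤ h) {s t : ℝ} (ht : 0 ≤ t) (hts : t ≤ s) :
    s ^ h - t ^ h ≤ h * s ^ (h - 1) * (s - t) := by
  rcases hts.eq_or_lt with rfl | hlt
  · simp
  have hslope := (convexOn_rpow hh).slope_le_of_hasDerivAt ht (ht.trans hts) hlt
    (hasDerivAt_rpow_const (Or.inr hh))
  rwa [slope_def_field, div_le_iff₀ (sub_pos.2 hlt)] at hslope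

lemma abs_rpow_sub_rpow_le (hh : 1 ≤ h) {s t : ℝ} (hs : 0 ≤ s) (ht : 0 ≤ t) :
    |s ^ h - t ^ h| ≤ h * max s t ^ (h - 1) * |s - t| := by
  have hh0 : 0 ≤ h := by linarith
  rcases le_total t s with hts | hst
  · rw [abs_of_nonneg (sub_nonneg.2 (rpow_le_rpow ht hts hh0)),
      abs_of_nonneg (sub_nonneg.2 hts), max_eq_left hts]
    exact rpow_sub_rpow_le_mul_rpow_sub_one_mul hh ht hts
  · rw [abs_sub_comm, abs_of_nonneg (sub_nonneg.2 (rpow_le_rpow hs hst hh0)),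
      abs_sub_comm, abs_of_nonneg (sub_nonneg.2 hst), max_eq_right hst]
    exact rpow_sub_rpow_le_mul_rpow_sub_one_mul hh hs hst

lemma abs_phi_add_sub_phi_le (hh1 : 1 ≤ h) (hh2 : h ≤ 2) (x y : ℝ) :
    |phi h (x + y) - phi h x| ≤ phiDeriv h x * |y| + h * |y| ^ h := by
  set t := max 0 x
  set s := max 0 (x + y)
  have ht : 0 ≤ t := le_max_left _ _
  have hst : |s - t| ≤ |y| := by
    simpa [max_comm _ (0 : ℝ)] using abs_max_sub_max_le_abs (x + y) x 0
  have hmax : max s t ≤ t + |y| :=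
    max_le (by linarith [le_abs_self (s - t)]) (le_add_of_nonneg_right (abs_nonneg y))
  have hsubadd : max s t ^ (h - 1) ≤ t ^ (h - 1) + |y| ^ (h - 1) :=
    (rpow_le_rpow (ht.trans (le_max_right _ _)) hmax (by linarith)).trans
      (rpow_add_le_add_rpow ht (abs_nonneg y) (by linarith) (by linarith))
  have hyh : |y| ^ (h - 1) * |y| = |y| ^ h := by
    rw [← rpow_add_one' (abs_nonneg y) (by linarith), sub_add_cancel]
  calc |phi h (x + y) - phi h x| = |s ^ h - t ^ h| := rfl
    _ ≤ h * max s t ^ (h - 1) * |s - t| := abs_rpow_sub_rpow_le hh1 (le_max_left _ _) ht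
    _ ≤ h * (t ^ (h - 1) + |y| ^ (h - 1)) * |y| := by
        have : 0 ≤ h := by linarith
        gcongr
    _ = phiDeriv h x * |y| + h * |y| ^ h := by rw [phiDeriv, ← hyh]; ring

lemma phi_nonneg (x : ℝ) : 0 ≤ phi h x := by unfold phi; positivity

lemma phiDeriv_nonneg (hh : 0 ≤ h) (x : ℝ) : 0 ≤ phiDeriv h x := by unfold phiDeriv; positivity

lemma measurable_phi : Measurable (phi h) := by unfold phi; fun_prop

lemma measurable_phiDeriv : Measurable (phiDeriv h) := by unfold phiDeriv; fun_prop

lemma max_zero_sq_le_sq (x : ℝ) : max 0 x ^ 2 ≤ x ^ 2 := by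
  simpa using pow_le_pow_left₀ (le_max_left 0 x) (max_le (abs_nonneg x) (le_abs_self x)) 2

lemma phi_le_one_add_sq (hh0 : 0 ≤ h) (hh2 : h ≤ 2) (x : ℝ) : phi h x ≤ 1 + x ^ 2 := by
  have ht : 0 ≤ max 0 x := le_max_left _ _
  show max 0 x ^ h ≤ _
  rcases le_total (max 0 x) 1 with ht1 | ht1
  · linarith [rpow_le_one ht ht1 hh0, sq_nonneg x]
  · have : max 0 x ^ h ≤ max 0 x ^ (2 : ℝ) := rpow_le_rpow_of_exponent_le ht1 hh2
    rw [rpow_two] at this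
    linarith [max_zero_sq_le_sq x]

lemma phiDeriv_sq (x : ℝ) : phiDeriv h x ^ 2 = h ^ 2 * (max 0 x ^ 2) ^ (h - 1) := by
  rw [phiDeriv, mul_pow, ← rpow_mul_natCast (le_max_left _ _),
    ← rpow_natCast_mul (le_max_left _ _), mul_comm (h - 1)]

lemma phiDeriv_sq_le_four_mul_sq_add_two (hh1 : 1 ≤ h) (hh2 : h ≤ 2) (x : ℝ) :
    phiDeriv h x ^ 2 ≤ 4 * x ^ 2 + 2 := by
  set u := max 0 x ^ 2
  have hu : 0 ≤ u := sq_nonneg _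
  have hamgm : u ^ (h - 1) ≤ (h - 1) * u + (2 - h) := by
    simpa using geom_mean_le_arith_mean2_weighted (by linarith : 0 ≤ h - 1)
      (by linarith : 0 ≤ 2 - h) hu zero_le_one (by ring)
  have hc1 : h ^ 2 * (h - 1) ≤ 4 := by nlinarith
  have hc2 : h ^ 2 * (2 - h) ≤ 2 := by
    nlinarith [mul_nonneg (by linarith : 0 ≤ h) (sq_nonneg (h - 1))]
  calc phiDeriv h x ^ 2 = h ^ 2 * u ^ (h - 1) := phiDeriv_sq x
    _ ≤ h ^ 2 * ((h - 1) * u + (2 - h)) := by gcongr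
    _ = h ^ 2 * (h - 1) * u + h ^ 2 * (2 - h) := by ring
    _ ≤ 4 * u + 2 := by gcongr
    _ ≤ 4 * x ^ 2 + 2 := by linarith [max_zero_sq_le_sq x]

lemma phiDeriv_sq_le_four_mul_one_add_phi (hh1 : 1 ≤ h) (hh2 : h ≤ 2) (x : ℝ) :
    phiDeriv h x ^ 2 ≤ 4 * (1 + phi h x) := by
  have ht : 0 ≤ max 0 x := le_max_left _ _
  have hpow : (max 0 x ^ 2) ^ (h - 1) ≤ 1 + phi h x := by
    rcases le_total (max 0 x) 1 with ht1 | ht1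
    · linarith [phi_nonneg (h := h) x,
        rpow_le_one (sq_nonneg _) (pow_le_one₀ ht ht1) (by linarith : 0 ≤ h - 1)]
    · calc (max 0 x ^ 2) ^ (h - 1) = max 0 x ^ ((2 : ℕ) * (h - 1)) := (rpow_natCast_mul ht _ _).symm
        _ ≤ max 0 x ^ h := rpow_le_rpow_of_exponent_le ht1 (by push_cast; linarith)
        _ ≤ 1 + phi h x := le_add_of_nonneg_left zero_le_one
  calc phiDeriv h x ^ 2 = h ^ 2 * (max 0 x ^ 2) ^ (h - 1) := phiDeriv_sq x
    _ ≤ 4 * (1 + phi h x) := by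
        gcongr
        nlinarith

end Pointwise

section Integral

variable {Ω : Type*} [MeasurableSpace Ω] {μ : Measure Ω}

theorem integral_norm_mul_norm_le_sqrt_mul_sqrt {E : Type*} [NormedAddCommGroup E] {f g : Ω → E}
    (hf : MemLp f 2 μ) (hg : MemLp g 2 μ) :
    ∫ ω, ‖f ω‖ * ‖g ω‖ ∂μ ≤ √(∫ ω, ‖f ω‖ ^ 2 ∂μ) * √(∫ ω, ‖g ω‖ ^ 2 ∂μ) := by
  have hholder := integral_mul_norm_le_Lp_mul_Lq HolderConjugate.two_two
    (by simpa using hf) (by simpa using hg)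
  simpa only [rpow_two, ← sqrt_eq_rpow] using hholder

theorem integral_norm_rpow_le_integral_norm_rpow_rpow [IsProbabilityMeasure μ] {E : Type*}
    [NormedAddCommGroup E] {f : Ω → E} {p q : ℝ} (hp : 0 < p) (hpq : p ≤ q)
    (hf : MemLp f (ENNReal.ofReal q) μ) :
    ∫ ω, ‖f ω‖ ^ p ∂μ ≤ (∫ ω, ‖f ω‖ ^ q ∂μ) ^ (p / q) := by
  have hq : 0 < q := hp.trans_le hpq
  have hpq' : ENNReal.ofReal p ≤ ENNReal.ofReal q := ENNReal.ofReal_le_ofReal hpq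
  have hnorm := eLpNorm_le_eLpNorm_of_exponent_le hpq' hf.1
  rw [(hf.mono_exponent hpq').eLpNorm_eq_integral_rpow_norm (by simpa using hp)
      ENNReal.ofReal_ne_top,
    hf.eLpNorm_eq_integral_rpow_norm (by simpa using hq) ENNReal.ofReal_ne_top,
    ENNReal.toReal_ofReal hp.le, ENNReal.toReal_ofReal hq.le,
    ENNReal.ofReal_le_ofReal_iff (by positivity)] at hnorm
  have hP : 0 ≤ ∫ ω, ‖f ω‖ ^ p ∂μ := integral_nonneg fun ω => by positivity
  calc ∫ ω, ‖f ω‖ ^ p ∂μ = ((∫ ω, ‖f ω‖ ^ p ∂μ) ^ p⁻¹) ^ p := (rpow_inv_rpow hP hp.ne').symm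
    _ ≤ ((∫ ω, ‖f ω‖ ^ q ∂μ) ^ q⁻¹) ^ p := by gcongr
    _ = (∫ ω, ‖f ω‖ ^ q ∂μ) ^ (p / q) := by
        rw [← rpow_mul (integral_nonneg fun ω => by positivity), inv_mul_eq_div]

variable [IsFiniteMeasure μ] {h : ℝ} {a : Ω → ℝ}

lemma MeasureTheory.MemLp.integrable_phi_comp (hh0 : 0 ≤ h) (hh2 : h ≤ 2) (ha : MemLp a 2 μ) :
    Integrable (fun ω => phi h (a ω)) μ :=
  ((integrable_const 1).add ha.integrable_sq).mono'
    (measurable_phi.comp_aemeasurable ha.1.aemeasurable).aestronglyMeasurable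
    (ae_of_all _ fun ω => by
      rw [norm_of_nonneg (phi_nonneg _)]
      exact phi_le_one_add_sq hh0 hh2 (a ω))

lemma MeasureTheory.MemLp.phiDeriv_comp (hh1 : 1 ≤ h) (hh2 : h ≤ 2) (ha : MemLp a 2 μ) :
    MemLp (fun ω => phiDeriv h (a ω)) 2 μ := by
  have hmeas : AEStronglyMeasurable (fun ω => phiDeriv h (a ω)) μ :=
    (measurable_phiDeriv.comp_aemeasurable ha.1.aemeasurable).aestronglyMeasurable
  refine (memLp_two_iff_integrable_sq hmeas).2 <|
    ((ha.integrable_sq.const_mul 4).add (integrable_const 2)).mono' (hmeas.pow 2)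
      (ae_of_all _ fun ω => ?_)
  rw [norm_of_nonneg (sq_nonneg _)]
  exact phiDeriv_sq_le_four_mul_sq_add_two hh1 hh2 (a ω)

theorem abs_integral_phi_add_sub_phi_le [IsProbabilityMeasure μ] (hh1 : 1 ≤ h) (hh2 : h ≤ 2)
    {b : Ω → ℝ} (ha : MemLp a 2 μ) (hb : MemLp b 2 μ) :
    |∫ ω, (phi h (a ω + b ω) - phi h (a ω)) ∂μ| ≤
      √(∫ ω, phiDeriv h (a ω) ^ 2 ∂μ) * √(∫ ω, b ω ^ 2 ∂μ) + h * (∫ ω, b ω ^ 2 ∂μ) ^ (h / 2) := by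
  have hh0 : 0 ≤ h := by linarith
  have hb' : MemLp b (ENNReal.ofReal 2) μ := by simpa using hb
  have hbh : Integrable (fun ω => |b ω| ^ h) μ := by
    simpa [ENNReal.toReal_ofReal hh0] using
      (hb'.mono_exponent (ENNReal.ofReal_le_ofReal hh2)).integrable_norm_rpow'
  have hgb : Integrable (fun ω => phiDeriv h (a ω) * |b ω|) μ :=
    (ha.phiDeriv_comp hh1 hh2).integrable_mul hb.abs
  have hCS := integral_norm_mul_norm_le_sqrt_mul_sqrt (ha.phiDeriv_comp hh1 hh2) hb
  have hLyap := integral_norm_rpow_le_integral_norm_rpow_rpow (by linarith) hh2 hb'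
  simp only [norm_eq_abs, abs_of_nonneg (phiDeriv_nonneg hh0 _), sq_abs] at hCS
  simp only [norm_eq_abs, rpow_two, sq_abs] at hLyap
  calc |∫ ω, (phi h (a ω + b ω) - phi h (a ω)) ∂μ|
      ≤ ∫ ω, |phi h (a ω + b ω) - phi h (a ω)| ∂μ := abs_integral_le_integral_abs
    _ ≤ ∫ ω, (phiDeriv h (a ω) * |b ω| + h * |b ω| ^ h) ∂μ :=
        integral_mono (((ha.add hb).integrable_phi_comp hh0 hh2).sub
          (ha.integrable_phi_comp hh0 hh2)).abs (hgb.add (hbh.const_mul h))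
          fun ω => abs_phi_add_sub_phi_le hh1 hh2 (a ω) (b ω)
    _ = ∫ ω, phiDeriv h (a ω) * |b ω| ∂μ + h * ∫ ω, |b ω| ^ h ∂μ := by
        rw [integral_add hgb (hbh.const_mul h), integral_const_mul]
    _ ≤ _ := by gcongr

end Integral

/-- **Perturbation bounds for expectations of the activation.**
For square-integrable random variables `a, b` on a probability space and
`φ(z) = max(0,z)^h` with `h ∈ (1,2)`:
(1) `|E[φ(a+b) - φ(a)]| ≤ √(E[4a²+2])·√(E[b²]) + h·(E[b²])^{h/2}`, and
(2) `|E[φ(a+b) - φ(a)]| ≤ 2·E[1+φ(a)]·√(E[b²]) + h·(E[b²])^{h/2}`. -/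
theorem stmt15 (h : ℝ) (hh1 : 1 < h) (hh2 : h < 2)
    {Ω : Type*} [MeasurableSpace Ω] (P : Measure Ω) [IsProbabilityMeasure P]
    (a b : Ω → ℝ) (ha : MemLp a 2 P) (hb : MemLp b 2 P) :
    |∫ ω, (phi h (a ω + b ω) - phi h (a ω)) ∂P| ≤
        Real.sqrt (∫ ω, (4 * a ω ^ 2 + 2) ∂P) * Real.sqrt (∫ ω, b ω ^ 2 ∂P) +
          h * (∫ ω, b ω ^ 2 ∂P) ^ (h / 2) ∧
    |∫ ω, (phi h (a ω + b ω) - phi h (a ω)) ∂P| ≤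
        2 * (∫ ω, (1 + phi h (a ω)) ∂P) * Real.sqrt (∫ ω, b ω ^ 2 ∂P) +
          h * (∫ ω, b ω ^ 2 ∂P) ^ (h / 2) := by
  have hmain := abs_integral_phi_add_sub_phi_le hh1.le hh2.le ha hb
  have hg2 : Integrable (fun ω => phiDeriv h (a ω) ^ 2) P :=
    (ha.phiDeriv_comp hh1.le hh2.le).integrable_sq
  have hphi : Integrable (fun ω => 1 + phi h (a ω)) P :=
    (integrable_const 1).add (ha.integrable_phi_comp (by linarith) hh2.le)
  constructor
  · have hg2_le : ∫ ω, phiDeriv h (a ω) ^ 2 ∂P ≤ ∫ ω, (4 * a ω ^ 2 + 2) ∂P :=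
      integral_mono hg2 ((ha.integrable_sq.const_mul 4).add (integrable_const 2))
        fun ω => phiDeriv_sq_le_four_mul_sq_add_two hh1.le hh2.le (a ω)
    exact hmain.trans (by gcongr)
  · have hone : 1 ≤ ∫ ω, (1 + phi h (a ω)) ∂P := by
      simpa using integral_mono (integrable_const 1) hphi fun ω => by
        simp [phi_nonneg (h := h) (a ω)]
    have hg2_le : ∫ ω, phiDeriv h (a ω) ^ 2 ∂P ≤ 4 * ∫ ω, (1 + phi h (a ω)) ∂P := by
      rw [← integral_const_mul]
      exact integral_mono hg2 (hphi.const_mul 4)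
        fun ω => phiDeriv_sq_le_four_mul_one_add_phi hh1.le hh2.le (a ω)
    have hsqrt : √(∫ ω, phiDeriv h (a ω) ^ 2 ∂P) ≤ 2 * ∫ ω, (1 + phi h (a ω)) ∂P :=
      (sqrt_le_left (by linarith)).2 (by nlinarith)
    exact hmain.trans (by gcongr)
end

section
/- Let h ∈ (1,2), φ(z) := max(0,z)^h, and k > 0. Define γ₀ := 2·φ(√(1/(2k))) and γ⋆ := φ(√(k/(1+k)) + √(1/(k(1+k)))), and consider the function F(b,c,d) := φ(b+c) + φ(−b+d) on ℝ³. (1) If γ⋆ > γ₀, then the supremum of F over the set K := {(b,c,d) : b² + k(c²+d²) ≤ 1, b ≥ 0} equals γ⋆ and is attained at the point (b⋆, c⋆, d⋆) = (√(k/(1+k)), √(1/(k(1+k))), 0) and at no other point of K. (2) If γ₀ > γ⋆, then the supremum of F over the set {(b,c,d) : b² + k(c²+d²) ≤ 1} equals γ₀ and is attained at a point with b = 0 (namely (0, √(1/(2k)), √(1/(2k)))). -/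
open MeasureTheory Real
open scoped RealInnerProductSpace ENNReal NNReal

/-!
Write `u = b + c`, `v = d - b`. If `u ≤ 0` or `v ≤ 0`, only one term of `F` survives, and
Cauchy–Schwarz gives `k u² ≤ 1 + k`, so `F ≤ γ⋆`, with equality only at the stated point.
If `u, v > 0`, minimising the constraint over `b` leaves `k(1+k)(u² + v²) + 2k²uv ≤ 1 + 2k`.
Writing `u = p(1+τ)`, `v = p(1-τ)` gives `u^h + v^h = p^h ψ(τ)` with
`ψ(τ) = symPow h τ = (1+τ)^h + (1-τ)^h`, and `ψ(τ) ≤ 2(1-τ²) + 2^h τ²` because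
`(ψ(τ) - 2)/τ²` is increasing on `(0, 1]` (for `1 < h < 2`, `ψ'''` has the sign of `τ`).
Convexity of `x ↦ x^(2/h)` then bounds `(u^h + v^h)^(2/h)` by a linear-fractional function
of `τ²`, maximal at `τ = 0` (giving `γ₀`) or at `τ² = 1` (giving
`((1+2k)/(k(1+k)))^(h/2) < γ⋆`).
-/

namespace TrivariateOpt

open Set

lemma le_of_hasDerivAt_nonneg {f f' : ℝ → ℝ} {a b x : ℝ}
    (hf : ∀ y ∈ Ico a b, HasDerivAt f (f' y) y) (hf' : ∀ y ∈ Ioo a b, 0 ≤ f' y)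
    (hx : x ∈ Ico a b) : f a ≤ f x := by
  refine monotoneOn_of_hasDerivWithinAt_nonneg (f' := f') (convex_Ico a b)
    (fun y hy ↦ (hf y hy).continuousAt.continuousWithinAt) (fun y hy ↦ ?_) (fun y hy ↦ ?_)
    (left_mem_Ico.2 (hx.1.trans_lt hx.2)) hx hx.1
  all_goals rw [interior_Ico] at hy
  · exact (hf y (Ioo_subset_Ico_self hy)).hasDerivWithinAt
  · exact hf' y hy

noncomputable def symPow (q t : ℝ) : ℝ := (1 + t) ^ q + (1 - t) ^ q

noncomputable def antiPow (q t : ℝ) : ℝ := (1 + t) ^ q - (1 - t) ^ q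

lemma symPow_neg (q t : ℝ) : symPow q (-t) = symPow q t := by
  simp only [symPow, sub_neg_eq_add, ← sub_eq_add_neg]
  ring

lemma symPow_nonneg {q t : ℝ} (ht : t ∈ Icc (-1 : ℝ) 1) : 0 ≤ symPow q t :=
  add_nonneg (Real.rpow_nonneg (by linarith [ht.1]) q) (Real.rpow_nonneg (by linarith [ht.2]) q)

lemma hasDerivAt_symPow (q : ℝ) {t : ℝ} (ht : t ∈ Ioo (-1 : ℝ) 1) :
    HasDerivAt (symPow q) (q * antiPow (q - 1) t) t := by
  have hp := ((hasDerivAt_id' t).const_add 1).rpow_const (p := q) (Or.inl (by linarith [ht.1]))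
  have hm := ((hasDerivAt_id' t).const_sub 1).rpow_const (p := q) (Or.inl (by linarith [ht.2]))
  exact (hp.add hm).congr_deriv (by rw [antiPow]; ring)

lemma hasDerivAt_antiPow (q : ℝ) {t : ℝ} (ht : t ∈ Ioo (-1 : ℝ) 1) :
    HasDerivAt (antiPow q) (q * symPow (q - 1) t) t := by
  have hp := ((hasDerivAt_id' t).const_add 1).rpow_const (p := q) (Or.inl (by linarith [ht.1]))
  have hm := ((hasDerivAt_id' t).const_sub 1).rpow_const (p := q) (Or.inl (by linarith [ht.2]))
  exact (hp.sub hm).congr_deriv (by rw [symPow]; ring)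

lemma antiPow_nonpos {q t : ℝ} (hq : q ≤ 0) (ht : t ∈ Ico (0 : ℝ) 1) : antiPow q t ≤ 0 :=
  sub_nonpos.2 (Real.rpow_le_rpow_of_nonpos (by linarith [ht.2]) (by linarith [ht.1]) hq)

variable {h : ℝ}

-- `ψ' ≤ t ψ''`: the difference vanishes at `0` and has derivative `t ψ''' ≥ 0`
lemma antiPow_le_mul_symPow (hh1 : 1 < h) (hh2 : h < 2) {t : ℝ} (ht : t ∈ Ico (0 : ℝ) 1) :
    antiPow (h - 1) t ≤ t * (h - 1) * symPow (h - 2) t := by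
  have key := le_of_hasDerivAt_nonneg
    (f := fun t ↦ t * (h - 1) * symPow (h - 2) t - antiPow (h - 1) t)
    (f' := fun t ↦ t * (h - 1) * ((h - 2) * antiPow (h - 3) t))
    (fun y hy ↦ ?_) (fun y hy ↦ ?_) ht
  · simpa [antiPow] using key
  · have hy' := Ico_subset_Ioo_left neg_one_lt_zero hy
    refine ((((hasDerivAt_id' y).mul_const (h - 1)).mul (hasDerivAt_symPow (h - 2) hy')).sub
      (hasDerivAt_antiPow (h - 1) hy')).congr_deriv ?_
    rw [show h - 2 - 1 = h - 3 by ring, show h - 1 - 1 = h - 2 by ring]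
    ring
  · exact mul_nonneg (mul_nonneg hy.1.le (by linarith)) (mul_nonneg_of_nonpos_of_nonpos
      (by linarith) (antiPow_nonpos (by linarith) (Ioo_subset_Ico_self hy)))

-- `2 (ψ - 2) ≤ t ψ'`, i.e. `(ψ - 2) / t²` is increasing
lemma two_mul_symPow_le (hh1 : 1 < h) (hh2 : h < 2) {t : ℝ} (ht : t ∈ Ico (0 : ℝ) 1) :
    2 * symPow h t ≤ t * h * antiPow (h - 1) t + 4 := by
  have key := le_of_hasDerivAt_nonneg
    (f := fun t ↦ t * h * antiPow (h - 1) t - 2 * symPow h t + 4)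
    (f' := fun t ↦ h * (t * (h - 1) * symPow (h - 2) t - antiPow (h - 1) t))
    (fun y hy ↦ ?_) (fun y hy ↦ ?_) ht
  · simp only [antiPow, symPow] at key ⊢
    norm_num at key
    linarith
  · have hy' := Ico_subset_Ioo_left neg_one_lt_zero hy
    refine (((((hasDerivAt_id' y).mul_const h).mul (hasDerivAt_antiPow (h - 1) hy')).sub
      ((hasDerivAt_symPow h hy').const_mul 2)).add_const 4).congr_deriv ?_
    rw [show h - 1 - 1 = h - 2 by ring]
    ring
  · exact mul_nonneg (by linarith)
      (sub_nonneg.2 (antiPow_le_mul_symPow hh1 hh2 (Ioo_subset_Ico_self hy)))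

lemma continuous_symPow {q : ℝ} (hq : 0 ≤ q) : Continuous (symPow q) :=
  ((Real.continuous_rpow_const hq).comp (by fun_prop)).add
    ((Real.continuous_rpow_const hq).comp (by fun_prop))

lemma symPow_sub_two_div_sq_monotoneOn (hh1 : 1 < h) (hh2 : h < 2) :
    MonotoneOn (fun t ↦ (symPow h t - 2) / t ^ 2) (Ioc 0 1) := by
  refine monotoneOn_of_hasDerivWithinAt_nonneg (convex_Ioc 0 1)
    (f' := fun t ↦ t * (t * h * antiPow (h - 1) t - 2 * symPow h t + 4) / t ^ 4)
    (fun t ht ↦ (((continuous_symPow (by linarith)).continuousAt.sub continuousAt_const).div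
      (continuous_pow 2).continuousAt (pow_ne_zero 2 ht.1.ne')).continuousWithinAt)
    (fun t ht ↦ ?_) (fun t ht ↦ ?_)
  all_goals rw [interior_Ioc] at ht
  · refine ((((hasDerivAt_symPow h (Ioo_subset_Ioo_left neg_one_lt_zero.le ht)).sub_const 2).div
      (hasDerivAt_pow 2 t) (pow_ne_zero 2 ht.1.ne')).congr_deriv ?_).hasDerivWithinAt
    have ht0 : t ≠ 0 := ht.1.ne'
    field_simp
    ring
  · exact div_nonneg (mul_nonneg ht.1.le
      (by linarith [two_mul_symPow_le hh1 hh2 (Ioo_subset_Ico_self ht)])) (by positivity)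

lemma symPow_le (hh1 : 1 < h) (hh2 : h < 2) {t : ℝ} (ht : |t| ≤ 1) :
    symPow h t ≤ 2 * (1 - t ^ 2) + 2 ^ h * t ^ 2 := by
  wlog ht0 : 0 ≤ t generalizing t
  · simpa [symPow_neg] using this (t := -t) (by rwa [abs_neg]) (by linarith)
  rcases ht0.eq_or_lt with rfl | ht0
  · norm_num [symPow]
  have ht1 : t ≤ 1 := (le_abs_self t).trans ht
  have hmono := symPow_sub_two_div_sq_monotoneOn hh1 hh2 ⟨ht0, ht1⟩ ⟨one_pos, le_rfl⟩ ht1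
  have h1 : symPow h 1 = 2 ^ h := by
    norm_num [symPow, Real.zero_rpow (by linarith : h ≠ 0)]
  simp only [h1, one_pow, div_one] at hmono
  rw [div_le_iff₀ (by positivity)] at hmono
  linarith

lemma symPow_rpow_le (hh1 : 1 < h) (hh2 : h < 2) {t : ℝ} (ht : |t| ≤ 1) :
    symPow h t ^ (2 / h) ≤ 2 ^ (2 / h) * (1 - t ^ 2) + 4 * t ^ 2 := by
  have ht2 : t ^ 2 ≤ 1 := by nlinarith [sq_abs t, abs_nonneg t]
  have hconv := (convexOn_rpow (p := 2 / h) (by rw [le_div_iff₀ (by linarith)]; linarith)).2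
    (mem_Ici.2 zero_le_two) (mem_Ici.2 (Real.rpow_nonneg zero_le_two h))
    (sub_nonneg.2 ht2) (sq_nonneg t) (sub_add_cancel 1 (t ^ 2))
  have h4 : ((2 : ℝ) ^ h) ^ (2 / h) = 4 := by
    rw [← Real.rpow_mul zero_le_two, mul_div_cancel₀ _ (by linarith : h ≠ 0)]
    norm_num
  simp only [smul_eq_mul, h4] at hconv
  calc symPow h t ^ (2 / h) ≤ ((1 - t ^ 2) * 2 + t ^ 2 * 2 ^ h) ^ (2 / h) := by
        gcongr
        · exact symPow_nonneg (abs_le.1 ht)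
        · linarith [symPow_le hh1 hh2 ht]
    _ ≤ _ := by linarith

lemma rpow_add_rpow_le_of_polar (hh1 : 1 < h) (hh2 : h < 2) {k M p τ : ℝ} (hk : 0 < k)
    (hp : 0 ≤ p) (hτ : |τ| ≤ 1) (hpτ : 2 * k * p ^ 2 * (1 + 2 * k + τ ^ 2) ≤ 1 + 2 * k)
    (hM₀ : 2 ^ (2 / h) ≤ 2 * k * M) (hM₁ : 1 + 2 * k ≤ k * (1 + k) * M) :
    (p * (1 + τ)) ^ h + (p * (1 - τ)) ^ h ≤ M ^ (h / 2) := by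
  have hh0 : h ≠ 0 := by linarith
  have hτ2 : τ ^ 2 ≤ 1 := by nlinarith [sq_abs τ, abs_nonneg τ]
  have hψ : 0 ≤ symPow h τ := symPow_nonneg (abs_le.1 hτ)
  have hM : 0 ≤ M := by
    have := Real.rpow_pos_of_pos (zero_lt_two (α := ℝ)) (2 / h)
    nlinarith
  have hpolar : (p * (1 + τ)) ^ h + (p * (1 - τ)) ^ h
      = (p ^ 2 * symPow h τ ^ (2 / h)) ^ (h / 2) := by
    rw [Real.mul_rpow hp (by linarith [(abs_le.1 hτ).1]),
      Real.mul_rpow hp (by linarith [(abs_le.1 hτ).2]), ← mul_add,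
      Real.mul_rpow (sq_nonneg p) (Real.rpow_nonneg hψ _), ← Real.rpow_mul hψ,
      show 2 / h * (h / 2) = 1 by field_simp, Real.rpow_one,
      Real.rpow_div_two_eq_sqrt h (sq_nonneg p), Real.sqrt_sq hp]
    rfl
  rw [hpolar]
  refine Real.rpow_le_rpow (by positivity) ?_ (by linarith)
  -- the bound is linear-fractional in `τ²`, so it suffices to check `τ² = 0` and `τ² = 1`
  have hN : (1 + 2 * k) * (2 ^ (2 / h) * (1 - τ ^ 2) + 4 * τ ^ 2)
      ≤ 2 * k * (1 + 2 * k + τ ^ 2) * M := by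
    nlinarith [mul_le_mul_of_nonneg_left hM₀ (by nlinarith : 0 ≤ (1 + 2 * k) * (1 - τ ^ 2)),
      mul_le_mul_of_nonneg_left hM₁ (by positivity : 0 ≤ 4 * τ ^ 2)]
  have hN' : p ^ 2 * (2 ^ (2 / h) * (1 - τ ^ 2) + 4 * τ ^ 2) ≤ M := by
    refine le_of_mul_le_mul_left ?_ (by linarith : 0 < 1 + 2 * k)
    nlinarith [mul_le_mul_of_nonneg_left hN (sq_nonneg p), mul_le_mul_of_nonneg_right hpτ hM]
  exact (mul_le_mul_of_nonneg_left (symPow_rpow_le hh1 hh2 hτ) (sq_nonneg p)).trans hN'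

lemma rpow_add_rpow_le (hh1 : 1 < h) (hh2 : h < 2) {k M u v : ℝ} (hk : 0 < k)
    (hu : 0 ≤ u) (hv : 0 ≤ v)
    (huv : k * (1 + k) * (u ^ 2 + v ^ 2) + 2 * k ^ 2 * (u * v) ≤ 1 + 2 * k)
    (hM₀ : 2 ^ (2 / h) ≤ 2 * k * M) (hM₁ : 1 + 2 * k ≤ k * (1 + k) * M) :
    u ^ h + v ^ h ≤ M ^ (h / 2) := by
  obtain ⟨p, τ, hp, hτ, rfl, rfl⟩ :
      ∃ p τ : ℝ, 0 ≤ p ∧ |τ| ≤ 1 ∧ u = p * (1 + τ) ∧ v = p * (1 - τ) := by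
    rcases (add_nonneg hu hv).eq_or_lt with huv0 | huv0
    · exact ⟨0, 0, le_rfl, by simp, by linarith, by linarith⟩
    refine ⟨(u + v) / 2, (u - v) / (u + v), by positivity, ?_, ?_, ?_⟩
    · rw [abs_div, abs_of_pos huv0, div_le_one huv0]
      exact abs_le.2 ⟨by linarith, by linarith⟩
    all_goals field_simp; ring
  refine rpow_add_rpow_le_of_polar hh1 hh2 hk hp hτ ?_ hM₀ hM₁
  linarith [show k * (1 + k) * ((p * (1 + τ)) ^ 2 + (p * (1 - τ)) ^ 2)
    + 2 * k ^ 2 * (p * (1 + τ) * (p * (1 - τ))) = 2 * k * p ^ 2 * (1 + 2 * k + τ ^ 2) by ring]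

lemma phi_of_nonpos (hh : h ≠ 0) {z : ℝ} (hz : z ≤ 0) : phi h z = 0 := by
  rw [phi, max_eq_left hz, Real.zero_rpow hh]

lemma phi_of_nonneg {z : ℝ} (hz : 0 ≤ z) : phi h z = z ^ h := by
  rw [phi, max_eq_right hz]

lemma phi_sqrt {x : ℝ} (hx : 0 ≤ x) : phi h √x = x ^ (h / 2) := by
  rw [phi_of_nonneg (Real.sqrt_nonneg x), Real.rpow_div_two_eq_sqrt h hx]

lemma phi_mono (hh : 0 ≤ h) : Monotone (phi h) := fun _ _ hzw ↦
  Real.rpow_le_rpow (le_max_left _ _) (max_le_max le_rfl hzw) hh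

lemma phi_strictMonoOn (hh : 0 < h) : StrictMonoOn (phi h) (Ici 0) := fun z hz w hw hzw ↦ by
  rw [phi_of_nonneg hz, phi_of_nonneg hw]
  exact Real.rpow_lt_rpow hz hzw hh

lemma phi_le_phi_sqrt (hh : 0 ≤ h) {x z : ℝ} (hz : z ^ 2 ≤ x) : phi h z ≤ phi h √x :=
  phi_mono hh ((le_abs_self z).trans (Real.abs_le_sqrt hz))

lemma sq_add_le {k b c d : ℝ} (hk : 0 < k) (hbcd : b ^ 2 + k * (c ^ 2 + d ^ 2) ≤ 1) :
    (b + c) ^ 2 ≤ (1 + k) / k := by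
  rw [le_div_iff₀ hk]
  nlinarith [sq_nonneg (b - k * c), sq_nonneg d, mul_pos hk hk]

-- `(1 + 2k)(b² + k(c² + d²))` minus the left-hand side is `(b + k(d - c))²`
lemma quadratic_le {k b c d : ℝ} (hk : 0 < k) (hbcd : b ^ 2 + k * (c ^ 2 + d ^ 2) ≤ 1) :
    k * (1 + k) * ((b + c) ^ 2 + (-b + d) ^ 2) + 2 * k ^ 2 * ((b + c) * (-b + d))
      ≤ 1 + 2 * k := by
  nlinarith [sq_nonneg (b + k * (d - c)),
    mul_le_mul_of_nonneg_left hbcd (by linarith : 0 ≤ 1 + 2 * k)]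

lemma phi_add_phi_le_of_nonneg (hh1 : 1 < h) (hh2 : h < 2) {k b c d : ℝ} (hk : 0 < k)
    (hbcd : b ^ 2 + k * (c ^ 2 + d ^ 2) ≤ 1) (hu : 0 ≤ b + c) (hv : 0 ≤ -b + d) :
    phi h (b + c) + phi h (-b + d) ≤
      max (2 * phi h √(1 / (2 * k))) (phi h √((1 + 2 * k) / (k * (1 + k)))) := by
  have hM := rpow_add_rpow_le hh1 hh2 hk hu hv (quadratic_le hk hbcd)
    (M := max (2 ^ (2 / h) / (2 * k)) ((1 + 2 * k) / (k * (1 + k))))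
    (by rw [← div_le_iff₀' (by positivity)]; exact le_max_left _ _)
    (by rw [← div_le_iff₀' (by positivity)]; exact le_max_right _ _)
  have h₀ : (2 ^ (2 / h) / (2 * k)) ^ (h / 2) = 2 * phi h √(1 / (2 * k)) := by
    rw [phi_sqrt (by positivity), Real.div_rpow (by positivity) (by positivity),
      Real.div_rpow zero_le_one (by positivity), ← Real.rpow_mul zero_le_two,
      show 2 / h * (h / 2) = 1 by field_simp, Real.rpow_one, Real.one_rpow]
    ring
  rwa [phi_of_nonneg hu, phi_of_nonneg hv, ← h₀, phi_sqrt (by positivity),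
    ← Real.rpow_max (by positivity) (by positivity) (by linarith)]

lemma phi_sqrt_lt (hh : 0 < h) {k : ℝ} (hk : 0 < k) :
    phi h √((1 + 2 * k) / (k * (1 + k))) < phi h √((1 + k) / k) := by
  refine phi_strictMonoOn hh (Real.sqrt_nonneg _) (Real.sqrt_nonneg _)
    (Real.sqrt_lt_sqrt (by positivity) ?_)
  rw [div_lt_div_iff₀ (by positivity) hk]
  nlinarith [mul_pos (mul_pos hk hk) hk]

lemma phi_add_phi_le_max (hh1 : 1 < h) (hh2 : h < 2) {k b c d : ℝ} (hk : 0 < k)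
    (hbcd : b ^ 2 + k * (c ^ 2 + d ^ 2) ≤ 1) :
    phi h (b + c) + phi h (-b + d) ≤
      max (2 * phi h √(1 / (2 * k))) (phi h √((1 + k) / k)) := by
  have hh0 : h ≠ 0 := by linarith
  have hbcd' : (-b) ^ 2 + k * (d ^ 2 + c ^ 2) ≤ 1 := by linarith
  rcases le_total (b + c) 0 with hu | hu
  · rw [phi_of_nonpos hh0 hu, zero_add]
    exact (phi_le_phi_sqrt (by linarith) (sq_add_le hk hbcd')).trans (le_max_right _ _)
  rcases le_total (-b + d) 0 with hv | hv
  · rw [phi_of_nonpos hh0 hv, add_zero]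
    exact (phi_le_phi_sqrt (by linarith) (sq_add_le hk hbcd)).trans (le_max_right _ _)
  exact (phi_add_phi_le_of_nonneg hh1 hh2 hk hbcd hu hv).trans
    (max_le_max le_rfl (phi_sqrt_lt (by linarith) hk).le)

lemma sqrt_div_one_add {k : ℝ} (hk : 0 < k) :
    √(k / (1 + k)) = k / (1 + k) * √((1 + k) / k) := by
  rw [Real.sqrt_eq_iff_eq_sq (by positivity) (by positivity), mul_pow,
    Real.sq_sqrt (by positivity)]
  field_simp

lemma sqrt_one_div_mul_one_add {k : ℝ} (hk : 0 < k) :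
    √(1 / (k * (1 + k))) = √((1 + k) / k) / (1 + k) := by
  rw [Real.sqrt_eq_iff_eq_sq (by positivity) (by positivity), div_pow,
    Real.sq_sqrt (by positivity)]
  field_simp

lemma sqrt_add_sqrt_eq {k : ℝ} (hk : 0 < k) :
    √(k / (1 + k)) + √(1 / (k * (1 + k))) = √((1 + k) / k) := by
  rw [sqrt_div_one_add hk, sqrt_one_div_mul_one_add hk]
  field_simp
  ring

lemma eq_of_phi_eq (hh : 0 < h) {k b c d : ℝ} (hk : 0 < k)
    (hbcd : b ^ 2 + k * (c ^ 2 + d ^ 2) ≤ 1) (heq : phi h (b + c) = phi h √((1 + k) / k)) :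
    b = √(k / (1 + k)) ∧ c = √(1 / (k * (1 + k))) ∧ d = 0 := by
  have hk1 : 0 < 1 + k := by linarith
  have hw : 0 < √((1 + k) / k) := Real.sqrt_pos.2 (by positivity)
  have hu : 0 ≤ b + c := by
    by_contra! hu
    rw [phi_of_nonpos hh.ne' hu.le, phi_of_nonneg hw.le] at heq
    exact (Real.rpow_pos_of_pos hw h).ne heq
  have hbc : b + c = √((1 + k) / k) := (phi_strictMonoOn hh).injOn hu hw.le heq
  have hsq : k * (b + c) ^ 2 = 1 + k := by
    rw [hbc, Real.sq_sqrt (by positivity)]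
    field_simp
  -- equality case of Cauchy–Schwarz: `(1 + k)(b² + k c²) - k (b + c)² = (b - k c)²`
  have hCS : (b - k * c) ^ 2 + k * (1 + k) * d ^ 2 ≤ 0 := by nlinarith
  have hd : d = 0 := pow_eq_zero_iff two_ne_zero |>.1 <|
    le_antisymm (by nlinarith [sq_nonneg (b - k * c), mul_pos hk hk1]) (sq_nonneg d)
  have hbkc : b = k * c := sub_eq_zero.1 <| pow_eq_zero_iff two_ne_zero |>.1 <|
    le_antisymm (by nlinarith [sq_nonneg d, mul_pos hk hk1]) (sq_nonneg _)
  rw [sqrt_div_one_add hk, sqrt_one_div_mul_one_add hk, ← hbc, hbkc]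
  refine ⟨?_, ?_, hd⟩ <;> field_simp <;> ring

lemma eq_of_phi_add_phi_eq (hh1 : 1 < h) (hh2 : h < 2) {k b c d : ℝ} (hk : 0 < k)
    (hγ : 2 * phi h √(1 / (2 * k)) < phi h √((1 + k) / k))
    (hbcd : b ^ 2 + k * (c ^ 2 + d ^ 2) ≤ 1) (hb : 0 ≤ b)
    (heq : phi h (b + c) + phi h (-b + d) = phi h √((1 + k) / k)) :
    b = √(k / (1 + k)) ∧ c = √(1 / (k * (1 + k))) ∧ d = 0 := by
  have hh0 : 0 < h := by linarith
  rcases le_total (-b + d) 0 with hv | hv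
  · rw [phi_of_nonpos hh0.ne' hv, add_zero] at heq
    exact eq_of_phi_eq hh0 hk hbcd heq
  rcases le_total (b + c) 0 with hu | hu
  · rw [phi_of_nonpos hh0.ne' hu, zero_add] at heq
    -- `(b, c, d) ↦ (-b, d, c)` preserves the constraint and swaps the two terms
    obtain ⟨hb', -, -⟩ := eq_of_phi_eq hh0 hk (b := -b) (c := d) (d := c) (by linarith) heq
    have : 0 < √(k / (1 + k)) := Real.sqrt_pos.2 (by positivity)
    linarith
  have := (phi_add_phi_le_of_nonneg hh1 hh2 hk hbcd hu hv).trans_lt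
    (max_lt hγ (phi_sqrt_lt hh0 hk))
  linarith

lemma star_mem {k : ℝ} (hk : 0 < k) :
    √(k / (1 + k)) ^ 2 + k * (√(1 / (k * (1 + k))) ^ 2 + (0 : ℝ) ^ 2) ≤ 1 := by
  refine le_of_eq ?_
  rw [Real.sq_sqrt (by positivity), Real.sq_sqrt (by positivity)]
  field_simp
  ring

lemma phi_add_phi_star (hh : 0 < h) {k : ℝ} (hk : 0 < k) :
    phi h (√(k / (1 + k)) + √(1 / (k * (1 + k)))) + phi h (-√(k / (1 + k)) + 0)
      = phi h √((1 + k) / k) := by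
  rw [sqrt_add_sqrt_eq hk, add_zero, phi_of_nonpos hh.ne' (neg_nonpos.2 (Real.sqrt_nonneg _)),
    add_zero]

lemma diag_mem {k : ℝ} (hk : 0 < k) :
    (0 : ℝ) ^ 2 + k * (√(1 / (2 * k)) ^ 2 + √(1 / (2 * k)) ^ 2) ≤ 1 := by
  refine le_of_eq ?_
  rw [Real.sq_sqrt (by positivity)]
  field_simp
  ring

end TrivariateOpt

/-- **Structure of the optimum of the trivariate program (Opt 5).**
Let `F(b,c,d) = φ(b+c) + φ(-b+d)`, `γ₀ = 2φ(√(1/(2k)))` and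
`γ⋆ = φ(√(k/(1+k)) + √(1/(k(1+k))))`.
(1) If `γ₀ < γ⋆`, then on `K = {b² + k(c²+d²) ≤ 1, b ≥ 0}` the supremum of `F`
is `γ⋆`, attained exactly at `(√(k/(1+k)), √(1/(k(1+k))), 0)`.
(2) If `γ⋆ < γ₀`, then on `{b² + k(c²+d²) ≤ 1}` the supremum of `F` is `γ₀`,
attained at the point `(0, √(1/(2k)), √(1/(2k)))` which has `b = 0`. -/
theorem stmt16 (h : ℝ) (hh1 : 1 < h) (hh2 : h < 2) (k : ℝ) (hk : 0 < k)
    (γ0 γstar : ℝ)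
    (hγ0 : γ0 = 2 * phi h (Real.sqrt (1 / (2 * k))))
    (hγstar : γstar = phi h (Real.sqrt (k / (1 + k)) + Real.sqrt (1 / (k * (1 + k))))) :
    (γ0 < γstar →
      (sSup ((fun p : ℝ × ℝ × ℝ => phi h (p.1 + p.2.1) + phi h (-p.1 + p.2.2)) ''
          {p : ℝ × ℝ × ℝ | p.1 ^ 2 + k * (p.2.1 ^ 2 + p.2.2 ^ 2) ≤ 1 ∧ 0 ≤ p.1}) =
        γstar) ∧
      (Real.sqrt (k / (1 + k)) ^ 2 +
          k * (Real.sqrt (1 / (k * (1 + k))) ^ 2 + (0 : ℝ) ^ 2) ≤ 1) ∧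
      (phi h (Real.sqrt (k / (1 + k)) + Real.sqrt (1 / (k * (1 + k)))) +
          phi h (-Real.sqrt (k / (1 + k)) + 0) = γstar) ∧
      (∀ p : ℝ × ℝ × ℝ,
        p.1 ^ 2 + k * (p.2.1 ^ 2 + p.2.2 ^ 2) ≤ 1 → 0 ≤ p.1 →
        phi h (p.1 + p.2.1) + phi h (-p.1 + p.2.2) = γstar →
        p = (Real.sqrt (k / (1 + k)), Real.sqrt (1 / (k * (1 + k))), 0))) ∧
    (γstar < γ0 →
      (sSup ((fun p : ℝ × ℝ × ℝ => phi h (p.1 + p.2.1) + phi h (-p.1 + p.2.2)) ''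
          {p : ℝ × ℝ × ℝ | p.1 ^ 2 + k * (p.2.1 ^ 2 + p.2.2 ^ 2) ≤ 1}) = γ0) ∧
      ((0 : ℝ) ^ 2 + k * (Real.sqrt (1 / (2 * k)) ^ 2 + Real.sqrt (1 / (2 * k)) ^ 2) ≤ 1) ∧
      (phi h ((0 : ℝ) + Real.sqrt (1 / (2 * k))) +
          phi h (-(0 : ℝ) + Real.sqrt (1 / (2 * k))) = γ0)) := by
  have hh0 : 0 < h := by linarith
  rw [TrivariateOpt.sqrt_add_sqrt_eq hk] at hγstar
  subst hγ0 hγstar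
  have hbound (p : ℝ × ℝ × ℝ) (hp : p.1 ^ 2 + k * (p.2.1 ^ 2 + p.2.2 ^ 2) ≤ 1) :=
    TrivariateOpt.phi_add_phi_le_max hh1 hh2 hk hp
  have hdiag : phi h ((0 : ℝ) + √(1 / (2 * k))) + phi h (-(0 : ℝ) + √(1 / (2 * k)))
      = 2 * phi h √(1 / (2 * k)) := by
    rw [neg_zero, zero_add]
    ring
  have hstar_mem := TrivariateOpt.star_mem hk
  have hstar := TrivariateOpt.phi_add_phi_star hh0 hk
  refine ⟨fun hlt ↦ ⟨?_, hstar_mem, hstar, ?_⟩, fun hlt ↦ ⟨?_, TrivariateOpt.diag_mem hk, hdiag⟩⟩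
  · refine IsGreatest.csSup_eq
      ⟨⟨(√(k / (1 + k)), √(1 / (k * (1 + k))), 0), ⟨hstar_mem, Real.sqrt_nonneg _⟩, hstar⟩, ?_⟩
    exact Set.forall_mem_image.2 fun p hp ↦ (hbound p hp.1).trans (max_eq_right hlt.le).le
  · rintro ⟨b, c, d⟩ hbcd hb heq
    obtain ⟨rfl, rfl, rfl⟩ := TrivariateOpt.eq_of_phi_add_phi_eq hh1 hh2 hk hlt hbcd hb heq
    rfl
  · refine IsGreatest.csSup_eq
      ⟨⟨(0, √(1 / (2 * k)), √(1 / (2 * k))), TrivariateOpt.diag_mem hk, hdiag⟩, ?_⟩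
    exact Set.forall_mem_image.2 fun p hp ↦ (hbound p hp).trans (max_eq_left hlt.le).le
end
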